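/- The state space of the hypergraph H₆(19) — atoms {1,...,19} with blocks {1,2,3}, {1,4,5}, {1,6,7}, {2,8,9}, {2,10,11}, {3,12,13}, {3,14,15}, {4,8,12}, {4,10,14}, {5,9,13}, {5,11,16}, {6,9,15}, {6,11,17}, {7,10,18}, {7,13,19}, {8,16,19}, {12,17,18}, {14,17,19}, {15,16,18} — is affinely parametrized by (x,y) = (s(2), s(10)) over the hexagon {0 ≤ x ≤ 2/3, 1/6 ≤ y ≤ 1/2, x+y ≤ 1, y−x ≤ 1/3}, which has exactly 6 extreme points: (0,1/6), (0,1/3), (1/6,1/2), (1/2,1/2), (2/3,1/3), (2/3,1/6). -/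
import Mathlib
set_option maxHeartbeats 1000000


/-- The 19 blocks of the hypergraph H₆(19) on atoms {1,...,19}. -/
def H6Blocks : Finset (Finset ℕ) :=
  { {1,2,3}, {1,4,5}, {1,6,7}, {2,8,9}, {2,10,11}, {3,12,13}, {3,14,15},
    {4,8,12}, {4,10,14}, {5,9,13}, {5,11,16}, {6,9,15}, {6,11,17},
    {7,10,18}, {7,13,19}, {8,16,19}, {12,17,18}, {14,17,19}, {15,16,18} }

/-- A state on H₆(19): nonnegative on the atoms, summing to 1 on every block. -/
def H6IsState (s : ℕ → ℝ) : Prop :=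
  (∀ a ∈ Finset.Icc 1 19, 0 ≤ s a) ∧ ∀ b ∈ H6Blocks, ∑ a ∈ b, s a = 1

/-- The state of H₆(19) with parameters `x = s 2`, `y = s 10`: `s 5 = x`,
`s 6 = x - y + 1/3`, `s 11 = 1 - x - y`, `s 17 = 2y - 1/3`, `s 18 = 1 - 2y`,
value `y` on atoms 7, 15, 16; value `2/3 - x` on atoms 1, 9; value `2/3 - y` on
atoms 14, 19; and `1/3` on atoms 3, 4, 8, 12, 13. -/
noncomputable def H6StateOf (x y : ℝ) : ℕ → ℝ := fun a =>
  if a ∈ ({2, 5} : Finset ℕ) then x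
  else if a = 6 then x - y + 1/3
  else if a ∈ ({10, 7, 15, 16} : Finset ℕ) then y
  else if a = 11 then 1 - x - y
  else if a = 17 then 2*y - 1/3
  else if a = 18 then 1 - 2*y
  else if a ∈ ({1, 9} : Finset ℕ) then 2/3 - x
  else if a ∈ ({14, 19} : Finset ℕ) then 2/3 - y
  else 1/3

/-- The hexagon {0 ≤ x ≤ 2/3, 1/6 ≤ y ≤ 1/2, x + y ≤ 1, y − x ≤ 1/3}. -/
def H6Hex : Set (ℝ × ℝ) :=
  {p | 0 ≤ p.1 ∧ p.1 ≤ 2/3 ∧ 1/6 ≤ p.2 ∧ p.2 ≤ 1/2 ∧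
       p.1 + p.2 ≤ 1 ∧ p.2 - p.1 ≤ 1/3}

lemma notExt {x y dx dy : ℝ} (hd : ¬(dx = 0 ∧ dy = 0))
    (h1 : (x + dx, y + dy) ∈ H6Hex) (h2 : (x - dx, y - dy) ∈ H6Hex) :
    (x, y) ∉ Set.extremePoints ℝ H6Hex := by
  rw [mem_extremePoints]
  rintro ⟨-, h⟩
  have key : (x, y) ∈ openSegment ℝ ((x + dx, y + dy) : ℝ × ℝ) (x - dx, y - dy) := by
    refine ⟨1/2, 1/2, by norm_num, by norm_num, by norm_num, ?_⟩
    simp only [Prod.smul_mk, smul_eq_mul, Prod.mk_add_mk, Prod.mk.injEq]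
    constructor <;> ring
  have := (h _ h1 _ h2 key).1
  rw [Prod.mk.injEq] at this
  exact hd ⟨by linarith [this.1], by linarith [this.2]⟩


lemma mem_hex {x y : ℝ} : (x, y) ∈ H6Hex ↔
    (0 ≤ x ∧ x ≤ 2/3 ∧ 1/6 ≤ y ∧ y ≤ 1/2 ∧ x + y ≤ 1 ∧ y - x ≤ 1/3) := Iff.rfl

lemma hex_ext_sub : Set.extremePoints ℝ H6Hex ⊆
    {(0, 1/6), (0, 1/3), (1/6, 1/2), (1/2, 1/2), (2/3, 1/3), (2/3, 1/6)} := by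
  rintro ⟨x, y⟩ h
  simp only [Set.mem_insert_iff, Set.mem_singleton_iff, Prod.mk.injEq]
  by_contra hc
  push_neg at hc
  obtain ⟨h1, h2, h3, h4, h5, h6⟩ := mem_hex.mp h.1
  obtain ⟨c1, c2, c3, c4, c5, c6⟩ := hc
  by_cases hx0 : x = 0
  · -- y ∈ (1/6, 1/3)
    have hy1 : y ≠ 1/6 := fun hy => c1 hx0 hy
    have hy2 : y ≠ 1/3 := fun hy => c2 hx0 hy
    have hlt1 : 1/6 < y := lt_of_le_of_ne h3 (Ne.symm hy1)
    have hlt2 : y < 1/3 := lt_of_le_of_ne (by linarith) hy2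
    set ε := min (y - 1/6) (1/3 - y) with hε
    have he1 : ε ≤ y - 1/6 := min_le_left _ _
    have he2 : ε ≤ 1/3 - y := min_le_right _ _
    have hep : 0 < ε := lt_min (by linarith) (by linarith)
    exact notExt (dx := 0) (dy := ε) (by rintro ⟨-, h⟩; linarith)
      (mem_hex.mpr ⟨by linarith, by linarith, by linarith, by linarith, by linarith, by linarith⟩)
      (mem_hex.mpr ⟨by linarith, by linarith, by linarith, by linarith, by linarith, by linarith⟩) h
  by_cases hx23 : x = 2/3
  · have hy1 : y ≠ 1/3 := fun hy => c5 hx23 hy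
    have hy2 : y ≠ 1/6 := fun hy => c6 hx23 hy
    have hlt1 : 1/6 < y := lt_of_le_of_ne h3 (Ne.symm hy2)
    have hlt2 : y < 1/3 := lt_of_le_of_ne (by linarith) hy1
    set ε := min (y - 1/6) (1/3 - y) with hε
    have he1 : ε ≤ y - 1/6 := min_le_left _ _
    have he2 : ε ≤ 1/3 - y := min_le_right _ _
    have hep : 0 < ε := lt_min (by linarith) (by linarith)
    exact notExt (dx := 0) (dy := ε) (by rintro ⟨-, h⟩; linarith)
      (mem_hex.mpr ⟨by linarith, by linarith, by linarith, by linarith, by linarith, by linarith⟩)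
      (mem_hex.mpr ⟨by linarith, by linarith, by linarith, by linarith, by linarith, by linarith⟩) h
  have hx0' : 0 < x := lt_of_le_of_ne h1 (Ne.symm hx0)
  have hx23' : x < 2/3 := lt_of_le_of_ne h2 hx23
  by_cases hy12 : y = 1/2
  · have hxa : 1/6 ≤ x := by linarith [h6]
    have hxb : x ≤ 1/2 := by linarith [h5]
    have hx1 : x ≠ 1/6 := fun hx => c3 hx hy12
    have hx2 : x ≠ 1/2 := fun hx => c4 hx hy12
    have hlt1 : 1/6 < x := lt_of_le_of_ne hxa (Ne.symm hx1)
    have hlt2 : x < 1/2 := lt_of_le_of_ne hxb hx2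
    set ε := min (x - 1/6) (1/2 - x) with hε
    have he1 : ε ≤ x - 1/6 := min_le_left _ _
    have he2 : ε ≤ 1/2 - x := min_le_right _ _
    have hep : 0 < ε := lt_min (by linarith) (by linarith)
    exact notExt (dx := ε) (dy := 0) (by rintro ⟨h, -⟩; linarith)
      (mem_hex.mpr ⟨by linarith, by linarith, by linarith, by linarith, by linarith, by linarith⟩)
      (mem_hex.mpr ⟨by linarith, by linarith, by linarith, by linarith, by linarith, by linarith⟩) h
  have hy12' : y < 1/2 := lt_of_le_of_ne h4 hy12
  by_cases hxy : x + y = 1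
  · have hy3 : 1/3 < y := by linarith
    have hx12 : 1/2 ≤ x := by linarith
    set ε := min (2/3 - x) (min (y - 1/3) (min (1/2 - y) (2/3 - y))) with hε
    have he1 : ε ≤ 2/3 - x := min_le_left _ _
    have he2 : ε ≤ y - 1/3 := le_trans (min_le_right _ _) (min_le_left _ _)
    have he3 : ε ≤ 1/2 - y :=
      le_trans (min_le_right _ _) (le_trans (min_le_right _ _) (min_le_left _ _))
    have he4 : ε ≤ 2/3 - y :=
      le_trans (min_le_right _ _) (le_trans (min_le_right _ _) (min_le_right _ _))
    have hep : 0 < ε :=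
      lt_min (by linarith) (lt_min (by linarith) (lt_min (by linarith) (by linarith)))
    exact notExt (dx := ε) (dy := -ε) (by rintro ⟨h, -⟩; linarith)
      (mem_hex.mpr ⟨by linarith, by linarith, by linarith, by linarith, by linarith, by linarith⟩)
      (mem_hex.mpr ⟨by linarith, by linarith, by linarith, by linarith, by linarith, by linarith⟩) h
  have hxy' : x + y < 1 := lt_of_le_of_ne h5 hxy
  by_cases hyx : y - x = 1/3
  · have hx16 : x < 1/6 := by linarith
    have hy3 : 1/3 < y := by linarith
    set ε := min x (1/2 - y) with hε
    have he1 : ε ≤ x := min_le_left _ _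
    have he2 : ε ≤ 1/2 - y := min_le_right _ _
    have hep : 0 < ε := lt_min (by linarith) (by linarith)
    exact notExt (dx := ε) (dy := ε) (by rintro ⟨h, -⟩; linarith)
      (mem_hex.mpr ⟨by linarith, by linarith, by linarith, by linarith, by linarith, by linarith⟩)
      (mem_hex.mpr ⟨by linarith, by linarith, by linarith, by linarith, by linarith, by linarith⟩) h
  have hyx' : y - x < 1/3 := lt_of_le_of_ne h6 hyx
  set ε := min x (min (2/3 - x) (min (1 - x - y) (1/3 - y + x))) with hε
  have he1 : ε ≤ x := min_le_left _ _
  have he2 : ε ≤ 2/3 - x := le_trans (min_le_right _ _) (min_le_left _ _)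
  have he3 : ε ≤ 1 - x - y :=
    le_trans (min_le_right _ _) (le_trans (min_le_right _ _) (min_le_left _ _))
  have he4 : ε ≤ 1/3 - y + x :=
    le_trans (min_le_right _ _) (le_trans (min_le_right _ _) (min_le_right _ _))
  have hep : 0 < ε :=
    lt_min (by linarith) (lt_min (by linarith) (lt_min (by linarith) (by linarith)))
  exact notExt (dx := ε) (dy := 0) (by rintro ⟨h, -⟩; linarith)
    (mem_hex.mpr ⟨by linarith, by linarith, by linarith, by linarith, by linarith, by linarith⟩)
    (mem_hex.mpr ⟨by linarith, by linarith, by linarith, by linarith, by linarith, by linarith⟩) h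

lemma hex_ext1 : ((0 : ℝ), (1/6 : ℝ)) ∈ Set.extremePoints ℝ H6Hex := by
  rw [mem_extremePoints]
  refine ⟨mem_hex.mpr (by norm_num), ?_⟩
  rintro ⟨a1, a2⟩ ha ⟨b1, b2⟩ hb ⟨t, u, ht, hu, htu, heq⟩
  obtain ⟨ha1, ha2, ha3, ha4, ha5, ha6⟩ := mem_hex.mp ha
  obtain ⟨hb1, hb2, hb3, hb4, hb5, hb6⟩ := mem_hex.mp hb
  simp only [Prod.smul_mk, smul_eq_mul, Prod.mk_add_mk, Prod.mk.injEq] at heq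
  obtain ⟨hq1, hq2⟩ := heq
  have hA1 : a1 = 0 := by nlinarith [mul_nonneg ht.le ha1, mul_nonneg hu.le hb1]
  have hB1 : b1 = 0 := by nlinarith [mul_nonneg ht.le ha1, mul_nonneg hu.le hb1]
  have hA2 : a2 = 1/6 := by
    nlinarith [mul_nonneg ht.le (by linarith : (0:ℝ) ≤ a2 - 1/6),
      mul_nonneg hu.le (by linarith : (0:ℝ) ≤ b2 - 1/6)]
  have hB2 : b2 = 1/6 := by
    nlinarith [mul_nonneg ht.le (by linarith : (0:ℝ) ≤ a2 - 1/6),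
      mul_nonneg hu.le (by linarith : (0:ℝ) ≤ b2 - 1/6)]
  exact ⟨by simp [hA1, hA2], by simp [hB1, hB2]⟩

lemma hex_ext2 : ((0 : ℝ), (1/3 : ℝ)) ∈ Set.extremePoints ℝ H6Hex := by
  rw [mem_extremePoints]
  refine ⟨mem_hex.mpr (by norm_num), ?_⟩
  rintro ⟨a1, a2⟩ ha ⟨b1, b2⟩ hb ⟨t, u, ht, hu, htu, heq⟩
  obtain ⟨ha1, ha2, ha3, ha4, ha5, ha6⟩ := mem_hex.mp ha
  obtain ⟨hb1, hb2, hb3, hb4, hb5, hb6⟩ := mem_hex.mp hb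
  simp only [Prod.smul_mk, smul_eq_mul, Prod.mk_add_mk, Prod.mk.injEq] at heq
  obtain ⟨hq1, hq2⟩ := heq
  have hA1 : a1 = 0 := by nlinarith [mul_nonneg ht.le ha1, mul_nonneg hu.le hb1]
  have hB1 : b1 = 0 := by nlinarith [mul_nonneg ht.le ha1, mul_nonneg hu.le hb1]
  have hA2 : a2 = 1/3 := by
    nlinarith [mul_nonneg ht.le (by linarith : (0:ℝ) ≤ 1/3 - a2),
      mul_nonneg hu.le (by linarith : (0:ℝ) ≤ 1/3 - b2)]
  have hB2 : b2 = 1/3 := by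
    nlinarith [mul_nonneg ht.le (by linarith : (0:ℝ) ≤ 1/3 - a2),
      mul_nonneg hu.le (by linarith : (0:ℝ) ≤ 1/3 - b2)]
  exact ⟨by simp [hA1, hA2], by simp [hB1, hB2]⟩

lemma hex_ext3 : ((1/6 : ℝ), (1/2 : ℝ)) ∈ Set.extremePoints ℝ H6Hex := by
  rw [mem_extremePoints]
  refine ⟨mem_hex.mpr (by norm_num), ?_⟩
  rintro ⟨a1, a2⟩ ha ⟨b1, b2⟩ hb ⟨t, u, ht, hu, htu, heq⟩
  obtain ⟨ha1, ha2, ha3, ha4, ha5, ha6⟩ := mem_hex.mp ha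
  obtain ⟨hb1, hb2, hb3, hb4, hb5, hb6⟩ := mem_hex.mp hb
  simp only [Prod.smul_mk, smul_eq_mul, Prod.mk_add_mk, Prod.mk.injEq] at heq
  obtain ⟨hq1, hq2⟩ := heq
  have hA2 : a2 = 1/2 := by
    nlinarith [mul_nonneg ht.le (by linarith : (0:ℝ) ≤ 1/2 - a2),
      mul_nonneg hu.le (by linarith : (0:ℝ) ≤ 1/2 - b2)]
  have hB2 : b2 = 1/2 := by
    nlinarith [mul_nonneg ht.le (by linarith : (0:ℝ) ≤ 1/2 - a2),
      mul_nonneg hu.le (by linarith : (0:ℝ) ≤ 1/2 - b2)]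
  have hA1 : a1 = 1/6 := by
    nlinarith [mul_nonneg ht.le (by linarith : (0:ℝ) ≤ a1 - 1/6),
      mul_nonneg hu.le (by linarith : (0:ℝ) ≤ b1 - 1/6)]
  have hB1 : b1 = 1/6 := by
    nlinarith [mul_nonneg ht.le (by linarith : (0:ℝ) ≤ a1 - 1/6),
      mul_nonneg hu.le (by linarith : (0:ℝ) ≤ b1 - 1/6)]
  exact ⟨by simp [hA1, hA2], by simp [hB1, hB2]⟩

lemma hex_ext4 : ((1/2 : ℝ), (1/2 : ℝ)) ∈ Set.extremePoints ℝ H6Hex := by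
  rw [mem_extremePoints]
  refine ⟨mem_hex.mpr (by norm_num), ?_⟩
  rintro ⟨a1, a2⟩ ha ⟨b1, b2⟩ hb ⟨t, u, ht, hu, htu, heq⟩
  obtain ⟨ha1, ha2, ha3, ha4, ha5, ha6⟩ := mem_hex.mp ha
  obtain ⟨hb1, hb2, hb3, hb4, hb5, hb6⟩ := mem_hex.mp hb
  simp only [Prod.smul_mk, smul_eq_mul, Prod.mk_add_mk, Prod.mk.injEq] at heq
  obtain ⟨hq1, hq2⟩ := heq
  have hA2 : a2 = 1/2 := by
    nlinarith [mul_nonneg ht.le (by linarith : (0:ℝ) ≤ 1/2 - a2),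
      mul_nonneg hu.le (by linarith : (0:ℝ) ≤ 1/2 - b2)]
  have hB2 : b2 = 1/2 := by
    nlinarith [mul_nonneg ht.le (by linarith : (0:ℝ) ≤ 1/2 - a2),
      mul_nonneg hu.le (by linarith : (0:ℝ) ≤ 1/2 - b2)]
  have hA1 : a1 = 1/2 := by
    nlinarith [mul_nonneg ht.le (by linarith : (0:ℝ) ≤ 1/2 - a1),
      mul_nonneg hu.le (by linarith : (0:ℝ) ≤ 1/2 - b1)]
  have hB1 : b1 = 1/2 := by
    nlinarith [mul_nonneg ht.le (by linarith : (0:ℝ) ≤ 1/2 - a1),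
      mul_nonneg hu.le (by linarith : (0:ℝ) ≤ 1/2 - b1)]
  exact ⟨by simp [hA1, hA2], by simp [hB1, hB2]⟩

lemma hex_ext5 : ((2/3 : ℝ), (1/3 : ℝ)) ∈ Set.extremePoints ℝ H6Hex := by
  rw [mem_extremePoints]
  refine ⟨mem_hex.mpr (by norm_num), ?_⟩
  rintro ⟨a1, a2⟩ ha ⟨b1, b2⟩ hb ⟨t, u, ht, hu, htu, heq⟩
  obtain ⟨ha1, ha2, ha3, ha4, ha5, ha6⟩ := mem_hex.mp ha
  obtain ⟨hb1, hb2, hb3, hb4, hb5, hb6⟩ := mem_hex.mp hb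
  simp only [Prod.smul_mk, smul_eq_mul, Prod.mk_add_mk, Prod.mk.injEq] at heq
  obtain ⟨hq1, hq2⟩ := heq
  have hA1 : a1 = 2/3 := by
    nlinarith [mul_nonneg ht.le (by linarith : (0:ℝ) ≤ 2/3 - a1),
      mul_nonneg hu.le (by linarith : (0:ℝ) ≤ 2/3 - b1)]
  have hB1 : b1 = 2/3 := by
    nlinarith [mul_nonneg ht.le (by linarith : (0:ℝ) ≤ 2/3 - a1),
      mul_nonneg hu.le (by linarith : (0:ℝ) ≤ 2/3 - b1)]
  have hA2 : a2 = 1/3 := by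
    nlinarith [mul_nonneg ht.le (by linarith : (0:ℝ) ≤ 1/3 - a2),
      mul_nonneg hu.le (by linarith : (0:ℝ) ≤ 1/3 - b2)]
  have hB2 : b2 = 1/3 := by
    nlinarith [mul_nonneg ht.le (by linarith : (0:ℝ) ≤ 1/3 - a2),
      mul_nonneg hu.le (by linarith : (0:ℝ) ≤ 1/3 - b2)]
  exact ⟨by simp [hA1, hA2], by simp [hB1, hB2]⟩

lemma hex_ext6 : ((2/3 : ℝ), (1/6 : ℝ)) ∈ Set.extremePoints ℝ H6Hex := by
  rw [mem_extremePoints]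
  refine ⟨mem_hex.mpr (by norm_num), ?_⟩
  rintro ⟨a1, a2⟩ ha ⟨b1, b2⟩ hb ⟨t, u, ht, hu, htu, heq⟩
  obtain ⟨ha1, ha2, ha3, ha4, ha5, ha6⟩ := mem_hex.mp ha
  obtain ⟨hb1, hb2, hb3, hb4, hb5, hb6⟩ := mem_hex.mp hb
  simp only [Prod.smul_mk, smul_eq_mul, Prod.mk_add_mk, Prod.mk.injEq] at heq
  obtain ⟨hq1, hq2⟩ := heq
  have hA1 : a1 = 2/3 := by
    nlinarith [mul_nonneg ht.le (by linarith : (0:ℝ) ≤ 2/3 - a1),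
      mul_nonneg hu.le (by linarith : (0:ℝ) ≤ 2/3 - b1)]
  have hB1 : b1 = 2/3 := by
    nlinarith [mul_nonneg ht.le (by linarith : (0:ℝ) ≤ 2/3 - a1),
      mul_nonneg hu.le (by linarith : (0:ℝ) ≤ 2/3 - b1)]
  have hA2 : a2 = 1/6 := by
    nlinarith [mul_nonneg ht.le (by linarith : (0:ℝ) ≤ a2 - 1/6),
      mul_nonneg hu.le (by linarith : (0:ℝ) ≤ b2 - 1/6)]
  have hB2 : b2 = 1/6 := by
    nlinarith [mul_nonneg ht.le (by linarith : (0:ℝ) ≤ a2 - 1/6),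
      mul_nonneg hu.le (by linarith : (0:ℝ) ≤ b2 - 1/6)]
  exact ⟨by simp [hA1, hA2], by simp [hB1, hB2]⟩


lemma h6_part1 : ∀ s : ℕ → ℝ, H6IsState s →
    (s 2, s 10) ∈ H6Hex ∧ ∀ a ∈ Finset.Icc 1 19, s a = H6StateOf (s 2) (s 10) a := by
  intro s ⟨hn, hb⟩
  have e1 : s 1 + (s 2 + s 3) = 1 := by
    have := hb {1,2,3} (by decide)
    simpa [Finset.sum_insert] using this
  have e2 : s 1 + (s 4 + s 5) = 1 := by
    have := hb {1,4,5} (by decide)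
    simpa [Finset.sum_insert] using this
  have e3 : s 1 + (s 6 + s 7) = 1 := by
    have := hb {1,6,7} (by decide)
    simpa [Finset.sum_insert] using this
  have e4 : s 2 + (s 8 + s 9) = 1 := by
    have := hb {2,8,9} (by decide)
    simpa [Finset.sum_insert] using this
  have e5 : s 2 + (s 10 + s 11) = 1 := by
    have := hb {2,10,11} (by decide)
    simpa [Finset.sum_insert] using this
  have e6 : s 3 + (s 12 + s 13) = 1 := by
    have := hb {3,12,13} (by decide)
    simpa [Finset.sum_insert] using this
  have e7 : s 3 + (s 14 + s 15) = 1 := by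
    have := hb {3,14,15} (by decide)
    simpa [Finset.sum_insert] using this
  have e8 : s 4 + (s 8 + s 12) = 1 := by
    have := hb {4,8,12} (by decide)
    simpa [Finset.sum_insert] using this
  have e9 : s 4 + (s 10 + s 14) = 1 := by
    have := hb {4,10,14} (by decide)
    simpa [Finset.sum_insert] using this
  have e10 : s 5 + (s 9 + s 13) = 1 := by
    have := hb {5,9,13} (by decide)
    simpa [Finset.sum_insert] using this
  have e11 : s 5 + (s 11 + s 16) = 1 := by
    have := hb {5,11,16} (by decide)
    simpa [Finset.sum_insert] using this
  have e12 : s 6 + (s 9 + s 15) = 1 := by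
    have := hb {6,9,15} (by decide)
    simpa [Finset.sum_insert] using this
  have e13 : s 6 + (s 11 + s 17) = 1 := by
    have := hb {6,11,17} (by decide)
    simpa [Finset.sum_insert] using this
  have e14 : s 7 + (s 10 + s 18) = 1 := by
    have := hb {7,10,18} (by decide)
    simpa [Finset.sum_insert] using this
  have e15 : s 7 + (s 13 + s 19) = 1 := by
    have := hb {7,13,19} (by decide)
    simpa [Finset.sum_insert] using this
  have e16 : s 8 + (s 16 + s 19) = 1 := by
    have := hb {8,16,19} (by decide)
    simpa [Finset.sum_insert] using this
  have e17 : s 12 + (s 17 + s 18) = 1 := by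
    have := hb {12,17,18} (by decide)
    simpa [Finset.sum_insert] using this
  have e18 : s 14 + (s 17 + s 19) = 1 := by
    have := hb {14,17,19} (by decide)
    simpa [Finset.sum_insert] using this
  have e19 : s 15 + (s 16 + s 18) = 1 := by
    have := hb {15,16,18} (by decide)
    simpa [Finset.sum_insert] using this
  have nn : ∀ a ∈ Finset.Icc 1 19, 0 ≤ s a := hn
  constructor
  · refine ⟨?_, ?_, ?_, ?_, ?_, ?_⟩ <;>
      simp only [] <;>
      linarith [hn 1 (by decide), hn 5 (by decide), hn 6 (by decide), hn 9 (by decide),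
        hn 11 (by decide), hn 14 (by decide), hn 17 (by decide), hn 18 (by decide),
        hn 2 (by decide), hn 10 (by decide)]
  · intro a ha
    fin_cases ha <;> norm_num [H6StateOf] <;> linarith

lemma h6_part2 : ∀ p ∈ H6Hex, H6IsState (H6StateOf p.1 p.2) := by
  rintro ⟨x, y⟩ ⟨h1, h2, h3, h4, h5, h6⟩
  constructor
  · intro a ha
    fin_cases ha <;> norm_num [H6StateOf] <;> linarith
  · intro b hb
    fin_cases hb <;> norm_num [H6Blocks, Finset.sum_insert, H6StateOf] <;> ring

/-- The state space of H₆(19) is affinely parametrized by `(x, y) = (s 2, s 10)` over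
the hexagon {0 ≤ x ≤ 2/3, 1/6 ≤ y ≤ 1/2, x+y ≤ 1, y−x ≤ 1/3}, which has exactly 6
extreme points: (0,1/6), (0,1/3), (1/6,1/2), (1/2,1/2), (2/3,1/3), (2/3,1/6). -/
theorem H6_state_space :
    (∀ s : ℕ → ℝ, H6IsState s →
      (s 2, s 10) ∈ H6Hex ∧ ∀ a ∈ Finset.Icc 1 19, s a = H6StateOf (s 2) (s 10) a) ∧
    (∀ p ∈ H6Hex, H6IsState (H6StateOf p.1 p.2)) ∧
    Set.extremePoints ℝ H6Hex =
      {(0, 1/6), (0, 1/3), (1/6, 1/2), (1/2, 1/2), (2/3, 1/3), (2/3, 1/6)} := by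
  refine ⟨h6_part1, h6_part2, ?_⟩
  apply Set.Subset.antisymm hex_ext_sub
  intro p hp
  simp only [Set.mem_insert_iff, Set.mem_singleton_iff] at hp
  rcases hp with h | h | h | h | h | h <;> subst h
  exacts [hex_ext1, hex_ext2, hex_ext3, hex_ext4, hex_ext5, hex_ext6]
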